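/- arXiv:2309.07239 — 4 statements merged into one kernel-verified Lean document; each statement's English description precedes it below -/
import Mathlib

section
/- Nullity at order zero together with moderateness implies nullity at all orders: let Ω ⊆ ℝ^n be open and (f_ε)_{ε∈(0,1]} a family of smooth functions Ω → ℝ such that (i) for every compact K ⊂ Ω and every multi-index β there exists N ∈ ℕ with sup_K |∂^β f_ε| ≤ ε^{−N} eventually, and (ii) for every compact K ⊂ Ω and every q ∈ ℕ, sup_K |f_ε| ≤ ε^q eventually. Then for every compact K ⊂ Ω, every multi-index β, and every q ∈ ℕ, sup_K |∂^β f_ε| ≤ ε^q eventually. -/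
/-!
STATEMENT 12: Nullity at order zero together with moderateness implies nullity at all orders:
let `Ω ⊆ ℝ^n` be open and `(f_ε)` a family of smooth functions `Ω → ℝ` such that
(i) for every compact `K ⊂ Ω` and every derivative order there exists `N ∈ ℕ` with
`sup_K ‖∂^β f_ε‖ ≤ ε^{−N}` eventually, and (ii) for every compact `K ⊂ Ω` and every `q ∈ ℕ`,
`sup_K |f_ε| ≤ ε^q` eventually.  Then for every compact `K ⊂ Ω`, every derivative order, and
every `q ∈ ℕ`, `sup_K ‖∂^β f_ε‖ ≤ ε^q` eventually.  (Derivatives of all multi-indices `β`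
with `|β| = k` are encoded by the `k`-th iterated Fréchet derivative on `Ω`.)
-/

/-- A property `P` of `ε` holds *eventually* if it holds for all `ε` in some interval `(0, η]`
with `η ∈ (0,1]`. -/
def Ev (P : ℝ → Prop) : Prop :=
  ∃ η : ℝ, 0 < η ∧ η ≤ 1 ∧ ∀ ε : ℝ, 0 < ε → ε ≤ η → P ε

/-- Interpolation bound: if `u` is bounded by `M0` on a closed ball of radius `r` around `x`
and its second derivative is bounded by `M2` there, then for any `0 < t ≤ r`,
`‖Du(x)‖ ≤ 2 M0 / t + t M2`. -/
lemma taylor_fderiv_bound {E F : Type*} [NormedAddCommGroup E] [NormedSpace ℝ E]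
    [NormedAddCommGroup F] [NormedSpace ℝ F]
    (u : E → F) (x : E) (r t M0 M2 : ℝ) (ht : 0 < t) (htr : t ≤ r)
    (hd1 : ∀ z ∈ Metric.closedBall x r, DifferentiableAt ℝ u z)
    (hd2 : ∀ z ∈ Metric.closedBall x r, DifferentiableAt ℝ (fderiv ℝ u) z)
    (hM0 : ∀ z ∈ Metric.closedBall x r, ‖u z‖ ≤ M0)
    (hM2 : ∀ z ∈ Metric.closedBall x r, ‖fderiv ℝ (fderiv ℝ u) z‖ ≤ M2) :
    ‖fderiv ℝ u x‖ ≤ 2 * M0 / t + t * M2 := by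
  have hr : 0 < r := lt_of_lt_of_le ht htr
  have hx : x ∈ Metric.closedBall x r := Metric.mem_closedBall_self hr.le
  have hM0nn : 0 ≤ M0 := le_trans (norm_nonneg _) (hM0 x hx)
  have hM2nn : 0 ≤ M2 := le_trans (norm_nonneg (fderiv ℝ (fderiv ℝ u) x)) (hM2 x hx)
  -- Lipschitz bound for the derivative on the big ball
  have lip : ∀ z ∈ Metric.closedBall x r,
      ‖fderiv ℝ u z - fderiv ℝ u x‖ ≤ M2 * ‖z - x‖ := fun z hz =>
    (convex_closedBall x r).norm_image_sub_le_of_norm_fderiv_le hd2 hM2 hx hz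
  -- Taylor-type bound on the small ball
  have hsub : Metric.closedBall x t ⊆ Metric.closedBall x r :=
    Metric.closedBall_subset_closedBall htr
  have taylor : ∀ y ∈ Metric.closedBall x t,
      ‖u y - u x - (fderiv ℝ u x) (y - x)‖ ≤ M2 * t * ‖y - x‖ := by
    intro y hy
    refine (convex_closedBall x t).norm_image_sub_le_of_norm_fderiv_le'
      (fun z hz => hd1 z (hsub hz)) (fun z hz => ?_)
      (Metric.mem_closedBall_self ht.le) hy
    calc ‖fderiv ℝ u z - fderiv ℝ u x‖ ≤ M2 * ‖z - x‖ := lip z (hsub hz)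
      _ ≤ M2 * t := by
          have : ‖z - x‖ ≤ t := by
            rw [← dist_eq_norm]; exact Metric.mem_closedBall.mp hz
          exact mul_le_mul_of_nonneg_left this hM2nn
  -- conclude by the operator norm bound
  refine ContinuousLinearMap.opNorm_le_bound _ ?_ ?_
  · have : 0 ≤ 2 * M0 / t := div_nonneg (by linarith) ht.le
    nlinarith
  intro v
  rcases eq_or_ne v 0 with rfl | hv
  · simp
  have hvn : (0:ℝ) < ‖v‖ := norm_pos_iff.mpr hv
  set w : E := (t / ‖v‖) • v with hw
  have hwnorm : ‖w‖ = t := by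
    rw [hw, norm_smul, Real.norm_eq_abs, abs_div, abs_of_pos ht, abs_of_pos hvn]
    field_simp
  have hy : x + w ∈ Metric.closedBall x t := by
    simp [Metric.mem_closedBall, dist_eq_norm, hwnorm]
  have key := taylor (x + w) hy
  have hsimp : (x + w) - x = w := by abel
  rw [hsimp, hwnorm] at key
  have hTw : ‖(fderiv ℝ u x) w‖ ≤ 2 * M0 + M2 * t * t := by
    have h1 : ‖(fderiv ℝ u x) w‖
        ≤ ‖u (x + w) - u x - (fderiv ℝ u x) w‖ + ‖u (x + w) - u x‖ := by
      have := norm_sub_norm_le (u (x + w) - u x - (fderiv ℝ u x) w) (u (x + w) - u x)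
      have heq : (u (x + w) - u x - (fderiv ℝ u x) w) - (u (x + w) - u x)
          = -((fderiv ℝ u x) w) := by abel
      calc ‖(fderiv ℝ u x) w‖ = ‖(u (x + w) - u x - (fderiv ℝ u x) w) - (u (x + w) - u x)‖ := by
            rw [heq, norm_neg]
        _ ≤ ‖u (x + w) - u x - (fderiv ℝ u x) w‖ + ‖u (x + w) - u x‖ := norm_sub_le _ _
    have h2 : ‖u (x + w) - u x‖ ≤ 2 * M0 := by
      have := norm_sub_le (u (x + w)) (u x)
      have ha := hM0 (x + w) (hsub hy)
      have hb := hM0 x hx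
      linarith
    linarith
  -- `(fderiv u x) w = (t/‖v‖) • (fderiv u x) v`
  have hTweq : ‖(fderiv ℝ u x) w‖ = (t / ‖v‖) * ‖(fderiv ℝ u x) v‖ := by
    rw [hw, map_smul, norm_smul, Real.norm_eq_abs, abs_div, abs_of_pos ht, abs_of_pos hvn]
  rw [hTweq] at hTw
  rw [div_mul_eq_mul_div, div_le_iff₀ hvn] at hTw
  have h4 : t * ((2 * M0 / t + t * M2) * ‖v‖) = (2 * M0 + M2 * t * t) * ‖v‖ := by
    have h5 : 2 * M0 / t * t = 2 * M0 := div_mul_cancel₀ _ ht.ne'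
    linear_combination ‖v‖ * h5
  refine le_of_mul_le_mul_left ?_ ht
  rw [h4]
  exact hTw

lemma norm_isometryEquiv_comp_clm {E F G : Type*} [NormedAddCommGroup E] [NormedSpace ℝ E]
    [NormedAddCommGroup F] [NormedSpace ℝ F] [NormedAddCommGroup G] [NormedSpace ℝ G]
    (e : F ≃ₗᵢ[ℝ] G) (T : E →L[ℝ] F) : ‖(e : F →L[ℝ] G).comp T‖ = ‖T‖ :=
  ContinuousLinearMap.opNorm_ext _ T fun v => by simp

set_option maxHeartbeats 1000000 in
theorem nullity_order_zero_and_moderate_implies_nullity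
    (n : ℕ) (Ω : Set (EuclideanSpace ℝ (Fin n))) (hΩ : IsOpen Ω)
    (f : ℝ → EuclideanSpace ℝ (Fin n) → ℝ)
    (hsmooth : ∀ ε : ℝ, ε ∈ Set.Ioc (0:ℝ) 1 → ContDiffOn ℝ (⊤ : ℕ∞) (f ε) Ω)
    (hmoderate : ∀ K : Set (EuclideanSpace ℝ (Fin n)), K ⊆ Ω → IsCompact K → ∀ k : ℕ,
      ∃ N : ℕ, Ev fun ε => ∀ x ∈ K, ‖iteratedFDerivWithin ℝ k (f ε) Ω x‖ ≤ (ε ^ N)⁻¹)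
    (hnull0 : ∀ K : Set (EuclideanSpace ℝ (Fin n)), K ⊆ Ω → IsCompact K → ∀ q : ℕ,
      Ev fun ε => ∀ x ∈ K, |f ε x| ≤ ε ^ q) :
    ∀ K : Set (EuclideanSpace ℝ (Fin n)), K ⊆ Ω → IsCompact K → ∀ k : ℕ, ∀ q : ℕ,
      Ev fun ε => ∀ x ∈ K, ‖iteratedFDerivWithin ℝ k (f ε) Ω x‖ ≤ ε ^ q := by
  have main : ∀ k : ℕ, ∀ K : Set (EuclideanSpace ℝ (Fin n)), K ⊆ Ω → IsCompact K → ∀ q : ℕ,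
      Ev fun ε => ∀ x ∈ K, ‖iteratedFDerivWithin ℝ k (f ε) Ω x‖ ≤ ε ^ q := by
    intro k
    induction k with
    | zero =>
      intro K hKΩ hK q
      obtain ⟨η, hη0, hη1, hη⟩ := hnull0 K hKΩ hK q
      exact ⟨η, hη0, hη1, fun ε hε hεη x hx => by
        rw [norm_iteratedFDerivWithin_zero, Real.norm_eq_abs]
        exact hη ε hε hεη x hx⟩
    | succ k IH =>
      intro K hKΩ hK q
      obtain ⟨r0, hr0, hsub0⟩ := hK.exists_cthickening_subset_open hΩ hKΩ
      set r : ℝ := min r0 1 with hrdef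
      have hr : 0 < r := lt_min hr0 one_pos
      have hr1 : r ≤ 1 := min_le_right _ _
      set K' : Set (EuclideanSpace ℝ (Fin n)) := Metric.cthickening r K with hK'def
      have hK'Ω : K' ⊆ Ω :=
        (Metric.cthickening_mono (min_le_left _ _) K).trans hsub0
      have hK' : IsCompact K' := hK.cthickening
      obtain ⟨N, ⟨η₂, hη₂0, hη₂1, hη₂⟩⟩ := hmoderate K' hK'Ω hK' (k + 2)
      set m : ℕ := q + 1 + N with hmdef
      set a : ℕ := q + 1 + m with hadef
      obtain ⟨η₁, hη₁0, hη₁1, hη₁⟩ := IH K' hK'Ω hK' a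
      refine ⟨min (min η₁ η₂) (min r (1/3)), by positivity, ?_, ?_⟩
      · exact le_trans (le_trans (min_le_left _ _) (min_le_left _ _)) hη₁1
      intro ε hε hεη x hxK
      have hεη₁ : ε ≤ η₁ := le_trans hεη (le_trans (min_le_left _ _) (min_le_left _ _))
      have hεη₂ : ε ≤ η₂ := le_trans hεη (le_trans (min_le_left _ _) (min_le_right _ _))
      have hεr : ε ≤ r := le_trans hεη (le_trans (min_le_right _ _) (min_le_left _ _))
      have hε3 : ε ≤ 1/3 := le_trans hεη (le_trans (min_le_right _ _) (min_le_right _ _))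
      have hε1 : ε ≤ 1 := le_trans hεr hr1
      have hεIoc : ε ∈ Set.Ioc (0:ℝ) 1 := ⟨hε, hε1⟩
      -- the ball around x
      have hball : Metric.closedBall x r ⊆ K' :=
        Metric.closedBall_subset_cthickening hxK r
      have hballΩ : Metric.closedBall x r ⊆ Ω := hball.trans hK'Ω
      -- smoothness facts
      have hsm : ∀ z ∈ Metric.closedBall x r, ContDiffAt ℝ (⊤ : ℕ∞) (f ε) z := fun z hz =>
        (hsmooth ε hεIoc).contDiffAt (hΩ.mem_nhds (hballΩ hz))
      set u : EuclideanSpace ℝ (Fin n) →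
          (EuclideanSpace ℝ (Fin n) [×k]→L[ℝ] ℝ) := iteratedFDeriv ℝ k (f ε) with hudef
      have hd1 : ∀ z ∈ Metric.closedBall x r, DifferentiableAt ℝ u z := fun z hz =>
        ((hsm z hz).iteratedFDeriv_right (i := k) (by exact_mod_cast le_top)).differentiableAt one_ne_zero
      have hd2 : ∀ z ∈ Metric.closedBall x r, DifferentiableAt ℝ (fderiv ℝ u) z := by
        intro z hz
        exact (((hsm z hz).iteratedFDeriv_right (i := k) (m := 2) (by exact (WithTop.coe_le_coe.mpr (le_top : ((2 + k : ℕ) : ℕ∞) ≤ ⊤)))).fderiv_right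
          (m := 1) le_rfl).differentiableAt one_ne_zero
      have hεm : (0:ℝ) < ε ^ m := pow_pos hε m
      have hεmr : ε ^ m ≤ r := by
        calc ε ^ m ≤ ε ^ 1 := pow_le_pow_of_le_one hε.le hε1 (by omega)
          _ = ε := pow_one ε
          _ ≤ r := hεr
      have hM0 : ∀ z ∈ Metric.closedBall x r, ‖u z‖ ≤ ε ^ a := by
        intro z hz
        have : iteratedFDerivWithin ℝ k (f ε) Ω z = u z :=
          iteratedFDerivWithin_of_isOpen k hΩ (hballΩ hz)
        rw [← this]
        exact hη₁ ε hε hεη₁ z (hball hz)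
      letI : NormedAddCommGroup (EuclideanSpace ℝ (Fin n) →L[ℝ]
          (EuclideanSpace ℝ (Fin n) [×k]→L[ℝ] ℝ)) := inferInstance
      letI : NormedSpace ℝ (EuclideanSpace ℝ (Fin n) →L[ℝ]
          (EuclideanSpace ℝ (Fin n) [×k]→L[ℝ] ℝ)) := inferInstance
      have hM2 : ∀ z ∈ Metric.closedBall x r,
          ‖fderiv ℝ (fderiv ℝ u) z‖ ≤ (ε ^ N)⁻¹ := by
        intro z hz
        have h1 : fderiv ℝ u = ⇑(continuousMultilinearCurryLeftEquiv ℝ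
              (fun _ : Fin (k+1) => EuclideanSpace ℝ (Fin n)) ℝ) ∘
            iteratedFDeriv ℝ (k+1) (f ε) := by
          rw [hudef]; exact fderiv_iteratedFDeriv
        rw [h1, LinearIsometryEquiv.comp_fderiv, norm_isometryEquiv_comp_clm,
          norm_fderiv_iteratedFDeriv, ← iteratedFDerivWithin_of_isOpen (k+2) hΩ (hballΩ hz)]
        exact hη₂ ε hε hεη₂ z (hball hz)
      have key := taylor_fderiv_bound u x r (ε ^ m) (ε ^ a) ((ε ^ N)⁻¹)
        hεm hεmr hd1 hd2 hM0 hM2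
      have hxr : x ∈ Metric.closedBall x r := Metric.mem_closedBall_self hr.le
      have hnorm : ‖iteratedFDerivWithin ℝ (k+1) (f ε) Ω x‖ = ‖fderiv ℝ u x‖ := by
        rw [iteratedFDerivWithin_of_isOpen (k+1) hΩ (hballΩ hxr), hudef,
          norm_fderiv_iteratedFDeriv]
      rw [hnorm]
      have hεN : (0:ℝ) < ε ^ N := pow_pos hε N
      have e1 : 2 * ε ^ a / ε ^ m = 2 * ε ^ (q+1) := by
        rw [hadef, pow_add]
        field_simp
      have e2 : ε ^ m * (ε ^ N)⁻¹ = ε ^ (q+1) := by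
        rw [hmdef, pow_add]
        field_simp
      have e3 : (3:ℝ) * ε ^ (q+1) ≤ ε ^ q := by
        have : ε ^ (q+1) = ε ^ q * ε := pow_succ ε q
        rw [this]
        nlinarith [pow_pos hε q]
      calc ‖fderiv ℝ u x‖ ≤ 2 * ε ^ a / ε ^ m + ε ^ m * (ε ^ N)⁻¹ := key
        _ = 3 * ε ^ (q+1) := by rw [e1, e2]; ring
        _ ≤ ε ^ q := e3
  exact fun K hKΩ hK k q => main k K hKΩ hK q
end

section
/- The support of a generalized point is well defined and, for compactly supported points, nonempty and compact: for a moderate net p:(0,1]→ℝ^n define supp(p) = ⋂_{η∈(0,1]} closure{p(ε) : 0<ε≤η}. Then supp(p) = supp(q) whenever p−q is negligible; if p is compactly supported (i.e. some representative is bounded), then supp(p) is a nonempty compact subset of ℝ^n; and if ‖p‖ < 1 then supp(p) = {0}. -/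
open Set
open scoped Classical

noncomputable section

/-- A net of points of `ℝ^n` is *moderate* if `‖p ε‖ ≤ ε^(-N)` eventually, for some `N`. -/
def ModerateV {n : ℕ} (p : ℝ → EuclideanSpace ℝ (Fin n)) : Prop :=
  ∃ N : ℕ, Ev fun ε => ‖p ε‖ ≤ (ε ^ N)⁻¹

/-- A net of points of `ℝ^n` is *negligible* if `‖p ε‖ ≤ ε^q` eventually, for every `q`. -/
def NegligibleV {n : ℕ} (p : ℝ → EuclideanSpace ℝ (Fin n)) : Prop :=
  ∀ q : ℕ, Ev fun ε => ‖p ε‖ ≤ ε ^ q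

/-- The support of a net: the intersection over `η ∈ (0,1]` of the closures of the tails. -/
def suppP {n : ℕ} (p : ℝ → EuclideanSpace ℝ (Fin n)) : Set (EuclideanSpace ℝ (Fin n)) :=
  ⋂ η ∈ Ioc (0:ℝ) 1, closure (p '' Ioc 0 η)

/-- The set whose supremum is the valuation `V p`. -/
def VsetV {n : ℕ} (p : ℝ → EuclideanSpace ℝ (Fin n)) : Set ℝ :=
  {r : ℝ | Ev fun ε => ‖p ε‖ ≤ ε ^ r}

/-- The sharp norm `‖p‖ = e^{-V p}`, with value `0` when `V p = ∞`. -/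
noncomputable def vnormV {n : ℕ} (p : ℝ → EuclideanSpace ℝ (Fin n)) : ℝ :=
  if BddAbove (VsetV p) then Real.exp (-sSup (VsetV p)) else 0

/-!
The tails `p '' (0, η]` form a basis of the image of `𝓝[>] 0` under `p`, so the support is the set
of cluster points of `p` as `ε → 0⁺`. Cluster points do not change under a perturbation tending to
`0`, and a negligible net tends to `0`. A bounded net eventually stays in a closed ball, which is
compact: it therefore has a cluster point, and its cluster points form a closed subset of the ball.
Finally `‖p‖ < 1` gives `‖p ε‖ ≤ ε ^ r` eventually for some `r > 0`, so `p → 0` and `0` is its only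
cluster point.
-/

open Filter Topology

section ClusterPoints

variable {α X : Type*} {F : Filter α}

theorem MapClusterPt.of_tendsto_dist [PseudoMetricSpace X] {u v : α → X} {x : X}
    (hv : MapClusterPt x F v) (huv : Tendsto (fun a => dist (u a) (v a)) F (𝓝 0)) :
    MapClusterPt x F u := by
  rw [Metric.nhds_basis_ball.mapClusterPt_iff_frequently] at hv ⊢
  intro δ hδ
  have hclose : ∀ᶠ a in F, dist (u a) (v a) < δ / 2 := huv.eventually_lt_const (by positivity)
  refine ((hv (δ / 2) (by positivity)).and_eventually hclose).mono fun a ⟨hva, hua⟩ => ?_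
  calc dist (u a) x ≤ dist (u a) (v a) + dist (v a) x := dist_triangle _ _ _
    _ < δ / 2 + δ / 2 := add_lt_add hua hva
    _ = δ := add_halves δ

theorem setOf_mapClusterPt_eq_singleton_of_tendsto [TopologicalSpace X] [T2Space X] [NeBot F]
    {u : α → X} {y : X} (h : Tendsto u F (𝓝 y)) :
    {x | MapClusterPt x F u} = {y} := by
  ext x
  refine ⟨fun hx => eq_of_nhds_neBot (ClusterPt.mono hx h).neBot, ?_⟩
  rintro rfl
  exact h.mapClusterPt

theorem IsCompact.isCompact_setOf_mapClusterPt [TopologicalSpace X] [T2Space X] {s : Set X}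
    (hs : IsCompact s) {u : α → X} (h : ∀ᶠ a in F, u a ∈ s) :
    IsCompact {x | MapClusterPt x F u} :=
  hs.of_isClosed_subset isClosed_setOfPred_clusterPt
    fun _ hx => hs.isClosed.mem_of_mapClusterPt hx h

end ClusterPoints

theorem nhdsGT_zero_basis_Ioc_le_one :
    (𝓝[>] (0 : ℝ)).HasBasis (· ∈ Ioc (0 : ℝ) 1) (Ioc 0) :=
  (nhdsGT_basis_Ioc (0 : ℝ)).restrict fun η hη =>
    ⟨min η 1, lt_min hη one_pos, min_le_right _ _, Ioc_subset_Ioc_right (min_le_left _ _)⟩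

theorem ev_iff_eventually {P : ℝ → Prop} : Ev P ↔ ∀ᶠ ε in 𝓝[>] 0, P ε := by
  simp only [nhdsGT_zero_basis_Ioc_le_one.eventually_iff, Ev, mem_Ioc]
  grind

theorem tendsto_nhds_zero_of_norm_le_rpow {E : Type*} [SeminormedAddGroup E] {u : ℝ → E} {r : ℝ}
    (hr : 0 < r) (h : ∀ᶠ ε in 𝓝[>] 0, ‖u ε‖ ≤ ε ^ r) : Tendsto u (𝓝[>] 0) (𝓝 0) :=
  squeeze_zero_norm' h (tendsto_nhdsWithin_of_tendsto_nhds tendsto_id |>.rpow_const_nhds_zero hr)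

section Support

variable {n : ℕ}

theorem NegligibleV.tendsto_zero {p : ℝ → EuclideanSpace ℝ (Fin n)} (hp : NegligibleV p) :
    Tendsto p (𝓝[>] 0) (𝓝 0) :=
  tendsto_nhds_zero_of_norm_le_rpow one_pos <| by
    simpa only [Real.rpow_one, pow_one] using ev_iff_eventually.1 (hp 1)

theorem exists_pos_mem_VsetV_of_vnormV_lt_one {p : ℝ → EuclideanSpace ℝ (Fin n)}
    (hnorm : vnormV p < 1) : ∃ r ∈ VsetV p, 0 < r := by
  by_cases hbdd : BddAbove (VsetV p)
  · have hsup : 0 < sSup (VsetV p) := by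
      simpa only [vnormV, hbdd, if_true, Real.exp_lt_one_iff, neg_lt_zero] using hnorm
    -- an empty `VsetV p` would have the junk supremum `0`
    have hne : (VsetV p).Nonempty := by
      contrapose! hsup
      rw [hsup, Real.sSup_empty]
    exact exists_lt_of_lt_csSup hne hsup
  · exact not_bddAbove_iff.1 hbdd 0

theorem suppP_eq_setOf_mapClusterPt (p : ℝ → EuclideanSpace ℝ (Fin n)) :
    suppP p = {x | MapClusterPt x (𝓝[>] 0) p} := by
  ext x
  simp only [suppP, mem_iInter, mem_ofPred_eq, MapClusterPt,
    (nhdsGT_zero_basis_Ioc_le_one.map p).clusterPt_iff_forall_mem_closure]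

theorem suppP_eq_of_tendsto_sub {p q : ℝ → EuclideanSpace ℝ (Fin n)}
    (h : Tendsto (fun ε => p ε - q ε) (𝓝[>] 0) (𝓝 0)) : suppP p = suppP q := by
  have hdist : Tendsto (fun ε => dist (p ε) (q ε)) (𝓝[>] 0) (𝓝 0) := by
    simpa only [dist_eq_norm, norm_zero] using h.norm
  simp only [suppP_eq_setOf_mapClusterPt]
  ext x
  exact ⟨fun hx => hx.of_tendsto_dist (by simpa only [dist_comm] using hdist),
    fun hx => hx.of_tendsto_dist hdist⟩

theorem suppP_eq_singleton_of_tendsto {p : ℝ → EuclideanSpace ℝ (Fin n)}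
    {y : EuclideanSpace ℝ (Fin n)} (h : Tendsto p (𝓝[>] 0) (𝓝 y)) : suppP p = {y} := by
  rw [suppP_eq_setOf_mapClusterPt, setOf_mapClusterPt_eq_singleton_of_tendsto h]

theorem suppP_nonempty_and_isCompact_of_norm_le {p : ℝ → EuclideanSpace ℝ (Fin n)} {C : ℝ}
    (h : ∀ ε ∈ Ioc (0 : ℝ) 1, ‖p ε‖ ≤ C) : (suppP p).Nonempty ∧ IsCompact (suppP p) := by
  have hball : ∀ᶠ ε in 𝓝[>] 0, p ε ∈ Metric.closedBall 0 C := by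
    filter_upwards [Ioc_mem_nhdsGT one_pos] with ε hε
    simpa only [mem_closedBall_zero_iff] using h ε hε
  rw [suppP_eq_setOf_mapClusterPt]
  have hcpt := isCompact_closedBall (0 : EuclideanSpace ℝ (Fin n)) C
  obtain ⟨x, -, hx⟩ := hcpt.exists_mapClusterPt_of_frequently hball.frequently
  exact ⟨⟨x, hx⟩, hcpt.isCompact_setOf_mapClusterPt hball⟩

end Support

theorem support_wellDefined_nonempty_compact (n : ℕ) :
    -- the support only depends on the class modulo negligible nets
    (∀ p q : ℝ → EuclideanSpace ℝ (Fin n), ModerateV p → ModerateV q →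
      NegligibleV (fun ε => p ε - q ε) → suppP p = suppP q) ∧
    -- a compactly supported point has nonempty compact support
    (∀ p q : ℝ → EuclideanSpace ℝ (Fin n), ModerateV p →
      NegligibleV (fun ε => p ε - q ε) →
      (∃ C : ℝ, ∀ ε ∈ Ioc (0:ℝ) 1, ‖q ε‖ ≤ C) →
      (suppP p).Nonempty ∧ IsCompact (suppP p)) ∧
    -- a point of the unit ball has support `{0}`
    (∀ p : ℝ → EuclideanSpace ℝ (Fin n), ModerateV p → vnormV p < 1 →
      suppP p = {(0 : EuclideanSpace ℝ (Fin n))}) := by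
  refine ⟨fun p q _ _ hpq => suppP_eq_of_tendsto_sub hpq.tendsto_zero, ?_, ?_⟩
  · rintro p q - hpq ⟨C, hC⟩
    rw [suppP_eq_of_tendsto_sub hpq.tendsto_zero]
    exact suppP_nonempty_and_isCompact_of_norm_le hC
  · intro p _ hnorm
    obtain ⟨r, hr, hr_pos⟩ := exists_pos_mem_VsetV_of_vnormV_lt_one hnorm
    exact suppP_eq_singleton_of_tendsto
      (tendsto_nhds_zero_of_norm_le_rpow hr_pos (ev_iff_eventually.1 hr))
end
end

section
/- For any open set Ω ⊆ ℝ^n, the union of the supports of all compactly supported generalized points of Ω equals the topological closure of Ω in ℝ^n: ⋃_{p ∈ Ω̃_c} supp(p) = closure(Ω). -/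
open Set Filter Topology

/-!
A net with values eventually in `Ω` has its support in `closure Ω`, as the support lies in the
closure of any tail. Conversely, for `x ∈ closure Ω` choose `p ε ∈ Ω` with `dist (p ε) x < ε`:
this net is bounded on `(0, 1]` and converges to `x` as `ε → 0⁺`, so `x` lies in every tail
closure, i.e. in its support.
-/

theorem suppP_subset_closure_of_ev {n : ℕ} {p : ℝ → EuclideanSpace ℝ (Fin n)}
    {s : Set (EuclideanSpace ℝ (Fin n))} (h : Ev fun ε => p ε ∈ s) : suppP p ⊆ closure s := by
  obtain ⟨η, hη0, hη1, hs⟩ := h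
  refine (iInter₂_subset η ⟨hη0, hη1⟩).trans (closure_mono ?_)
  rintro _ ⟨ε, ⟨hε0, hεη⟩, rfl⟩
  exact hs ε hε0 hεη

theorem mem_suppP_of_tendsto {n : ℕ} {p : ℝ → EuclideanSpace ℝ (Fin n)}
    {x : EuclideanSpace ℝ (Fin n)} (h : Tendsto p (𝓝[>] 0) (𝓝 x)) : x ∈ suppP p := by
  refine mem_iInter₂.mpr fun η hη => mem_closure_of_tendsto h ?_
  filter_upwards [Ioc_mem_nhdsGT hη.1] with ε hε using mem_image_of_mem p hε

section PseudoMetric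

variable {α : Type*} [PseudoMetricSpace α]

theorem exists_net_mem_dist_lt_of_mem_closure {s : Set α} {x : α} (hx : x ∈ closure s) :
    ∃ p : ℝ → α, (∀ ε, 0 < ε → p ε ∈ s) ∧ ∀ ε, 0 < ε → dist (p ε) x < ε := by
  have : Nonempty α := ⟨x⟩
  have : ∀ ε : ℝ, 0 < ε → ∃ y ∈ s, dist x y < ε := Metric.mem_closure_iff.mp hx
  choose! p hps hpx using this
  exact ⟨p, hps, fun ε hε => (dist_comm _ _).trans_lt (hpx ε hε)⟩

theorem tendsto_nhdsGT_zero_of_dist_lt {p : ℝ → α} {x : α}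
    (h : ∀ ε, 0 < ε → dist (p ε) x < ε) : Tendsto p (𝓝[>] 0) (𝓝 x) := by
  refine Metric.tendsto_nhds.mpr fun δ hδ => ?_
  filter_upwards [Ioo_mem_nhdsGT hδ] with ε hε using (h ε hε.1).trans hε.2

end PseudoMetric

theorem union_supports_eq_closure_general (n : ℕ) (Ω : Set (EuclideanSpace ℝ (Fin n))) :
    ⋃ p ∈ {p : ℝ → EuclideanSpace ℝ (Fin n) |
        (∃ C : ℝ, ∀ ε ∈ Ioc (0:ℝ) 1, ‖p ε‖ ≤ C) ∧ Ev fun ε => p ε ∈ Ω},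
      suppP p = closure Ω := by
  refine Subset.antisymm (iUnion₂_subset fun p hp => suppP_subset_closure_of_ev hp.2)
    fun x hx => ?_
  obtain ⟨p, hpΩ, hpx⟩ := exists_net_mem_dist_lt_of_mem_closure hx
  have hbounded : ∀ ε ∈ Ioc (0:ℝ) 1, ‖p ε‖ ≤ ‖x‖ + 1 := fun ε hε =>
    calc ‖p ε‖ ≤ ‖x‖ + dist (p ε) x := by rw [dist_eq_norm]; exact norm_le_insert' _ _
      _ ≤ ‖x‖ + 1 := by linarith [hpx ε hε.1, hε.2]
  exact mem_iUnion₂.mpr ⟨p, ⟨⟨_, hbounded⟩, 1, one_pos, le_rfl, fun ε hε _ => hpΩ ε hε⟩,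
    mem_suppP_of_tendsto (tendsto_nhdsGT_zero_of_dist_lt hpx)⟩

theorem union_supports_eq_closure (n : ℕ) (Ω : Set (EuclideanSpace ℝ (Fin n)))
    (hΩ : IsOpen Ω) :
    ⋃ p ∈ {p : ℝ → EuclideanSpace ℝ (Fin n) |
        (∃ C : ℝ, ∀ ε ∈ Ioc (0:ℝ) 1, ‖p ε‖ ≤ C) ∧ Ev fun ε => p ε ∈ Ω},
      suppP p = closure Ω :=
  union_supports_eq_closure_general n Ω
end

section
/- The distributional pairing is computed by the embedded product: let u : ℝ → ℝ be continuous with compact support, φ : ℝ → ℝ smooth with compact support, and ρ : ℝ → ℝ a Schwartz function with ∫ρ = 1 and ∫ x^k ρ(x) dx = 0 for all integers k ≥ 1. Write ρ_ε(x) = ε^{−1} ρ(x/ε). Then the net ε ↦ ∫_ℝ (u * ρ_ε)(x) φ(x) dx − ∫_ℝ u(x) φ(x) dx is negligible, i.e. for every q ∈ ℕ there exists η ∈ (0,1] such that its absolute value is ≤ ε^q for all ε ∈ (0,η]. -/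
open MeasureTheory

/-- A real net is *negligible* if `|x ε| ≤ ε^q` eventually, for every `q : ℕ`. -/
def Negligible (x : ℝ → ℝ) : Prop :=
  ∀ q : ℕ, Ev fun ε => |x ε| ≤ ε ^ q

/-- Global Taylor remainder bound for smooth compactly supported functions. -/
lemma taylor_bound : ∀ (n : ℕ) (f : ℝ → ℝ), ContDiff ℝ (⊤ : ℕ∞) f → HasCompactSupport f →
    ∃ M : ℝ, 0 ≤ M ∧ ∀ a h : ℝ,
      |f (a + h) - ∑ k ∈ Finset.range (n + 1),
        iteratedDeriv k f a * h ^ k / (k.factorial : ℝ)| ≤ M * |h| ^ (n + 1) := by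
  intro n
  induction n with
  | zero =>
    intro f hf hfs
    obtain ⟨M, hM⟩ := (hfs.deriv).exists_bound_of_continuous
      (hf.continuous_deriv (by exact_mod_cast le_top))
    refine ⟨max M 0, le_max_right _ _, fun a h => ?_⟩
    have key : ‖f (a + h) - f a‖ ≤ max M 0 * ‖(a + h) - a‖ := by
      refine Convex.norm_image_sub_le_of_norm_deriv_le
        (fun x _ => (hf.differentiable (by simp)).differentiableAt)
        (fun x _ => le_max_of_le_left (hM x)) convex_univ trivial trivial
    simp only [add_sub_cancel_left, Real.norm_eq_abs] at key
    simpa using key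
  | succ n ih =>
    intro f hf hfs
    have hdf : ContDiff ℝ (⊤ : ℕ∞) (deriv f) := by
      have := (contDiff_infty_iff_deriv.mp (by exact_mod_cast hf)).2
      exact_mod_cast this
    obtain ⟨M, hM0, hM⟩ := ih (deriv f) hdf hfs.deriv
    refine ⟨M, hM0, fun a h => ?_⟩
    set g : ℝ → ℝ := fun t =>
      f (a + t) - ∑ k ∈ Finset.range (n + 2), iteratedDeriv k f a * t ^ k / (k.factorial : ℝ)
      with hg_def
    have hg : ∀ t : ℝ, HasDerivAt g
        (deriv f (a + t) - ∑ k ∈ Finset.range (n + 1),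
          iteratedDeriv k (deriv f) a * t ^ k / (k.factorial : ℝ)) t := by
      intro t
      have h1 : HasDerivAt (fun s : ℝ => f (a + s)) (deriv f (a + t)) t := by
        have hd := ((hf.differentiable (by simp)) (a + t)).hasDerivAt
        simpa [Function.comp_def] using (hd.comp t ((hasDerivAt_id t).const_add a))
      have h2 : HasDerivAt (fun s : ℝ => ∑ k ∈ Finset.range (n + 2),
            iteratedDeriv k f a * s ^ k / (k.factorial : ℝ))
          (∑ k ∈ Finset.range (n + 2),
            iteratedDeriv k f a * ((k : ℝ) * t ^ (k - 1)) / (k.factorial : ℝ)) t := by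
        refine HasDerivAt.fun_sum (fun k _ => ?_)
        exact ((hasDerivAt_pow k t).const_mul (iteratedDeriv k f a)).div_const _
      have heq : ∑ k ∈ Finset.range (n + 2),
            iteratedDeriv k f a * ((k : ℝ) * t ^ (k - 1)) / (k.factorial : ℝ)
          = ∑ k ∈ Finset.range (n + 1),
            iteratedDeriv k (deriv f) a * t ^ k / (k.factorial : ℝ) := by
        rw [Finset.sum_range_succ']
        simp only [Nat.cast_zero, zero_mul, mul_zero, zero_div, add_zero]
        refine Finset.sum_congr rfl (fun i _ => ?_)
        rw [← iteratedDeriv_succ', Nat.factorial_succ]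
        have h1 : ((i : ℝ) + 1) ≠ 0 := by positivity
        have h2 : ((i.factorial : ℝ)) ≠ 0 := by positivity
        push_cast
        field_simp
      rw [← heq]
      exact h1.sub h2
    have hg0 : g 0 = 0 := by
      simp only [hg_def, add_zero]
      rw [Finset.sum_range_succ']
      simp [iteratedDeriv_zero]
    have key : ‖g h - g 0‖ ≤ (M * |h| ^ (n + 1)) * ‖h - (0:ℝ)‖ := by
      refine Convex.norm_image_sub_le_of_norm_hasDerivWithin_le
        (f' := fun t => deriv f (a + t) - ∑ k ∈ Finset.range (n + 1),
          iteratedDeriv k (deriv f) a * t ^ k / (k.factorial : ℝ))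
        (fun t _ => (hg t).hasDerivWithinAt) (fun t ht => ?_) (convex_uIcc 0 h)
        (Set.left_mem_uIcc) (Set.right_mem_uIcc)
      have hth : |t| ≤ |h| := by
        rcases Set.mem_uIcc.mp ht with ⟨h1, h2⟩ | ⟨h1, h2⟩ <;>
          · rw [abs_le]; constructor <;> nlinarith [le_abs_self h, neg_abs_le h]
      calc ‖deriv f (a + t) - ∑ k ∈ Finset.range (n + 1),
            iteratedDeriv k (deriv f) a * t ^ k / (k.factorial : ℝ)‖
          ≤ M * |t| ^ (n + 1) := hM a t
        _ ≤ M * |h| ^ (n + 1) := by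
            exact mul_le_mul_of_nonneg_left (pow_le_pow_left₀ (abs_nonneg t) hth _) hM0
    rw [hg0, sub_zero, sub_zero, Real.norm_eq_abs, Real.norm_eq_abs] at key
    calc |g h| ≤ M * |h| ^ (n + 1) * |h| := key
      _ = M * |h| ^ (n + 2) := by ring

/-- `z^k ρ(z)` is integrable for a Schwartz function `ρ`. -/
lemma zkρ_int (ρ : SchwartzMap ℝ ℝ) (k : ℕ) : Integrable (fun z : ℝ => z ^ k * ρ z) := by
  refine (ρ.integrable_pow_mul volume k).mono'
    (((continuous_pow k).mul ρ.continuous).aestronglyMeasurable) (ae_of_all _ fun z => ?_)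
  rw [Real.norm_eq_abs, abs_mul, abs_pow]
  simp [Real.norm_eq_abs]

/-- Change of variables for the inner integral. -/
lemma inner_cov (φ : ℝ → ℝ) (ρ : SchwartzMap ℝ ℝ) {ε : ℝ} (hε : 0 < ε) (y : ℝ) :
    (∫ x : ℝ, ε⁻¹ * ρ ((x - y) / ε) * φ x) = ∫ z : ℝ, φ (y + ε * z) * ρ z := by
  have h1 : (∫ x : ℝ, ε⁻¹ * ρ ((x - y) / ε) * φ x)
      = ∫ x : ℝ, ε⁻¹ * ρ (x / ε) * φ (x + y) := by
    rw [← integral_sub_right_eq_self (fun x : ℝ => ε⁻¹ * ρ (x / ε) * φ (x + y)) y]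
    congr 1; funext x; simp
  rw [h1]
  have h2 := Measure.integral_comp_mul_left
    (fun x : ℝ => ε⁻¹ * ρ (x / ε) * φ (x + y)) ε
  simp only [mul_div_cancel_left₀ _ (ne_of_gt hε)] at h2
  have habs : |ε⁻¹| = ε⁻¹ := abs_of_pos (inv_pos.mpr hε)
  rw [habs, smul_eq_mul] at h2
  have h3 : (∫ z : ℝ, ε⁻¹ * ρ z * φ (ε * z + y))
      = ε⁻¹ * ∫ z : ℝ, φ (y + ε * z) * ρ z := by
    rw [← integral_const_mul]
    congr 1; funext z; ring_nf
  rw [h3] at h2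
  exact (mul_left_cancel₀ (inv_ne_zero (ne_of_gt hε)) h2).symm

/-- Moment estimate: mollified test function is close to the test function to high order. -/
lemma moment_est (φ : ℝ → ℝ) (ρ : SchwartzMap ℝ ℝ) (q : ℕ) (M : ℝ)
    (hM : ∀ a h : ℝ, |φ (a + h) - ∑ k ∈ Finset.range (q + 1),
        iteratedDeriv k φ a * h ^ k / (k.factorial : ℝ)| ≤ M * |h| ^ (q + 1))
    (B : ℝ) (hB : ∀ x, ‖φ x‖ ≤ B) (hφc : Continuous φ)
    (hρ1 : (∫ x : ℝ, ρ x) = 1) (hρk : ∀ k : ℕ, 1 ≤ k → (∫ x : ℝ, x ^ k * ρ x) = 0)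
    {ε : ℝ} (hε : 0 < ε) (y : ℝ) :
    |(∫ z : ℝ, φ (y + ε * z) * ρ z) - φ y|
      ≤ (M * ε ^ (q + 1)) * ∫ z : ℝ, ‖z‖ ^ (q + 1) * ‖ρ z‖ := by
  set T : ℝ → ℝ := fun z => ∑ k ∈ Finset.range (q + 1),
    iteratedDeriv k φ y * (ε * z) ^ k / (k.factorial : ℝ) with hT_def
  have hTrw : (fun z : ℝ => T z * ρ z) = fun z : ℝ => ∑ k ∈ Finset.range (q + 1),
      (iteratedDeriv k φ y * ε ^ k / (k.factorial : ℝ)) * (z ^ k * ρ z) := by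
    funext z
    rw [hT_def, Finset.sum_mul]
    exact Finset.sum_congr rfl fun k _ => by ring
  have hT_int : Integrable (fun z : ℝ => T z * ρ z) := by
    rw [hTrw]
    exact integrable_finset_sum _ fun k _ => (zkρ_int ρ k).const_mul _
  have hT_val : (∫ z : ℝ, T z * ρ z) = φ y := by
    rw [hTrw, integral_finset_sum _ fun k _ => (zkρ_int ρ k).const_mul _]
    rw [Finset.sum_eq_single_of_mem 0 (Finset.mem_range.mpr (Nat.succ_pos q))]
    · simp only [iteratedDeriv_zero, pow_zero, Nat.factorial_zero, Nat.cast_one, mul_one,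
        div_one, one_mul, integral_const_mul]
      simp [hρ1]
    · intro k _ hk
      rw [integral_const_mul, hρk k (Nat.one_le_iff_ne_zero.mpr hk), mul_zero]
  have hφρ_int : Integrable (fun z : ℝ => φ (y + ε * z) * ρ z) := by
    refine (ρ.integrable.norm.const_mul B).mono'
      ((hφc.comp (continuous_const.add (continuous_const.mul continuous_id))).mul
        ρ.continuous).aestronglyMeasurable (ae_of_all _ fun z => ?_)
    rw [norm_mul]
    exact mul_le_mul_of_nonneg_right (hB _) (norm_nonneg _)
  have hsplit : (∫ z : ℝ, φ (y + ε * z) * ρ z) - φ y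
      = ∫ z : ℝ, (φ (y + ε * z) - T z) * ρ z := by
    rw [← hT_val, ← integral_sub hφρ_int hT_int]
    congr 1; funext z; ring
  rw [hsplit, ← Real.norm_eq_abs]
  refine le_trans (norm_integral_le_of_norm_le
    (((ρ.integrable_pow_mul volume (q + 1)).const_mul (M * ε ^ (q + 1))))
    (ae_of_all _ fun z => ?_)) ?_
  · rw [norm_mul]
    have h1 : ‖φ (y + ε * z) - T z‖ ≤ M * |ε * z| ^ (q + 1) := hM y (ε * z)
    calc ‖φ (y + ε * z) - T z‖ * ‖ρ z‖
        ≤ (M * |ε * z| ^ (q + 1)) * ‖ρ z‖ :=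
          mul_le_mul_of_nonneg_right h1 (norm_nonneg _)
      _ = M * ε ^ (q + 1) * (‖z‖ ^ (q + 1) * ‖ρ z‖) := by
          simp only [abs_mul, abs_of_pos hε, mul_pow, Real.norm_eq_abs]; ring
  · rw [integral_const_mul]

theorem pairing_computed_by_embedded_product
    (u φ : ℝ → ℝ) (ρ : SchwartzMap ℝ ℝ)
    (hu : Continuous u) (hus : HasCompactSupport u)
    (hφ : ContDiff ℝ (⊤ : ℕ∞) φ) (hφs : HasCompactSupport φ)
    (hρ1 : (∫ x : ℝ, ρ x) = 1)
    (hρk : ∀ k : ℕ, 1 ≤ k → (∫ x : ℝ, x ^ k * ρ x) = 0) :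
    Negligible fun ε =>
      (∫ x : ℝ, (∫ y : ℝ, u y * (ε⁻¹ * ρ ((x - y) / ε))) * φ x) -
        ∫ x : ℝ, u x * φ x := by
  intro q
  have hφ' : ContDiff ℝ (⊤ : ℕ∞) φ := hφ.of_le (by simp)
  have hφc : Continuous φ := hφ'.continuous
  obtain ⟨M, hM0, hM⟩ := taylor_bound q φ hφ' hφs
  obtain ⟨B, hB⟩ := hφs.exists_bound_of_continuous hφc
  set Cρ : ℝ := ∫ z : ℝ, ‖z‖ ^ (q + 1) * ‖ρ z‖ with hCρ_def
  have hCρ0 : 0 ≤ Cρ := integral_nonneg fun z => by positivity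
  set C : ℝ := (∫ y : ℝ, ‖u y‖) * (M * Cρ) with hC_def
  have hC0 : 0 ≤ C := by
    apply mul_nonneg (integral_nonneg fun y => norm_nonneg _) (mul_nonneg hM0 hCρ0)
  refine ⟨min 1 (C + 1)⁻¹, lt_min one_pos (by positivity), min_le_left _ _, fun ε hε hεη => ?_⟩
  have hε1 : ε ≤ (C + 1)⁻¹ := le_trans hεη (min_le_right _ _)
  -- Fubini and change of variables
  set F : ℝ × ℝ → ℝ := fun p => u p.2 * (ε⁻¹ * ρ ((p.1 - p.2) / ε)) * φ p.1 with hF_def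
  have hFc : Continuous F := by
    exact ((hu.comp continuous_snd).mul (continuous_const.mul (ρ.continuous.comp
      ((continuous_fst.sub continuous_snd).div_const ε)))).mul (hφc.comp continuous_fst)
  have hFs : HasCompactSupport F := by
    refine HasCompactSupport.intro (hφs.prod hus) (fun p hp => ?_)
    rw [Set.mem_prod] at hp
    push_neg at hp
    by_cases h1 : p.1 ∈ tsupport φ
    · have h2 : p.2 ∉ tsupport u := hp h1
      simp [hF_def, image_eq_zero_of_notMem_tsupport h2]
    · simp [hF_def, image_eq_zero_of_notMem_tsupport h1]
  have hF_int : Integrable F := hFc.integrable_of_hasCompactSupport hFs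
  have hswap := integral_integral_swap
    (f := fun x y : ℝ => u y * (ε⁻¹ * ρ ((x - y) / ε)) * φ x) hF_int
  have hxrw : ∀ x : ℝ, (∫ y : ℝ, u y * (ε⁻¹ * ρ ((x - y) / ε))) * φ x
      = ∫ y : ℝ, u y * (ε⁻¹ * ρ ((x - y) / ε)) * φ x :=
    fun x => (integral_mul_const _ _).symm
  have hKdef : ∀ y : ℝ, (∫ x : ℝ, u y * (ε⁻¹ * ρ ((x - y) / ε)) * φ x)
      = u y * ∫ z : ℝ, φ (y + ε * z) * ρ z := by
    intro y
    rw [← inner_cov φ ρ hε y]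
    simp_rw [mul_assoc, integral_const_mul]
  have hmain : (∫ x : ℝ, (∫ y : ℝ, u y * (ε⁻¹ * ρ ((x - y) / ε))) * φ x)
      = ∫ y : ℝ, u y * ∫ z : ℝ, φ (y + ε * z) * ρ z := by
    simp_rw [hxrw]
    rw [hswap]
    simp only [hKdef]
  have huK_int : Integrable (fun y : ℝ => u y * ∫ z : ℝ, φ (y + ε * z) * ρ z) := by
    have h := hF_int.integral_prod_right
    exact h.congr (ae_of_all _ fun y => hKdef y)
  have huφ_int : Integrable (fun x : ℝ => u x * φ x) :=
    (hu.mul hφc).integrable_of_hasCompactSupport hus.mul_right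
  have hD : ((∫ x : ℝ, (∫ y : ℝ, u y * (ε⁻¹ * ρ ((x - y) / ε))) * φ x) -
        ∫ x : ℝ, u x * φ x)
      = ∫ y : ℝ, (u y * (∫ z : ℝ, φ (y + ε * z) * ρ z) - u y * φ y) := by
    rw [hmain, ← integral_sub huK_int huφ_int]
  have hbound : ‖∫ y : ℝ, (u y * (∫ z : ℝ, φ (y + ε * z) * ρ z) - u y * φ y)‖
      ≤ (∫ y : ℝ, ‖u y‖) * ((M * ε ^ (q + 1)) * Cρ) := by
    refine le_trans (norm_integral_le_of_norm_le
      (((hu.integrable_of_hasCompactSupport hus).norm).mul_const ((M * ε ^ (q + 1)) * Cρ))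
      (ae_of_all _ fun y => ?_)) ?_
    · rw [← mul_sub, norm_mul]
      refine mul_le_mul_of_nonneg_left ?_ (norm_nonneg _)
      rw [Real.norm_eq_abs]
      exact moment_est φ ρ q M hM B hB hφc hρ1 hρk hε y
    · rw [integral_mul_const]
  have h2 : C * ε ≤ 1 := by
    have h3 : C * ε ≤ C * (C + 1)⁻¹ := mul_le_mul_of_nonneg_left hε1 hC0
    have h4 : C * (C + 1)⁻¹ ≤ 1 := by
      rw [← div_eq_mul_inv]
      exact div_le_one_of_le₀ (by linarith) (by positivity)
    linarith
  calc |(∫ x : ℝ, (∫ y : ℝ, u y * (ε⁻¹ * ρ ((x - y) / ε))) * φ x) - ∫ x : ℝ, u x * φ x|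
      = ‖∫ y : ℝ, (u y * (∫ z : ℝ, φ (y + ε * z) * ρ z) - u y * φ y)‖ := by
        rw [hD, Real.norm_eq_abs]
    _ ≤ (∫ y : ℝ, ‖u y‖) * ((M * ε ^ (q + 1)) * Cρ) := hbound
    _ = (C * ε) * ε ^ q := by rw [hC_def]; ring
    _ ≤ 1 * ε ^ q := mul_le_mul_of_nonneg_right h2 (pow_nonneg hε.le q)
    _ = ε ^ q := one_mul _
end
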